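/- Let J : ℝⁿ → ℝ be C¹ with ∇J Lipschitz with constant L > 0, let 0 < α ≤ 1/(3L), and suppose J is bounded below. Then for the Grad-Avg iterates (θ_n), ∇J(θ_n) → 0 as n → ∞. -/

import Mathlib

/-!
By the descent lemma for an `L`-smooth function, a Grad-Avg step `v` from `x` satisfies
`f (x + v) ≤ f x + ⟪∇f x, v⟫ + L/2 ‖v‖²`. The second gradient differs from `∇f x` by at most
`Lα ‖∇f x‖`, so for `Lα ≤ 1/3` the step decreases `f` by at least `α/2 ‖∇f x‖²`. Summing these
decreases, bounded by `f (θ 0) - inf f`, shows that `∑ ‖∇f (θ k)‖²` converges.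
-/

open InnerProductSpace Filter Topology Set

section Smooth

variable {F : Type*} [NormedAddCommGroup F] [InnerProductSpace ℝ F] [CompleteSpace F]

theorem hasDerivAt_comp_add_smul {f : F → ℝ} {x v : F} {t : ℝ}
    (hf : DifferentiableAt ℝ f (x + t • v)) :
    HasDerivAt (fun s : ℝ => f (x + s • v)) ⟪gradient f (x + t • v), v⟫_ℝ t := by
  have hline : HasDerivAt (fun s : ℝ => x + s • v) v t := by
    simpa using ((hasDerivAt_id t).smul_const v).const_add x
  simpa [Function.comp_def] using hf.hasGradientAt.hasFDerivAt.comp_hasDerivAt t hline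

theorem apply_add_le_of_lipschitz_gradient {f : F → ℝ} (hf : Differentiable ℝ f) {L : ℝ}
    (hLip : ∀ x y, ‖gradient f x - gradient f y‖ ≤ L * ‖x - y‖) (x v : F) :
    f (x + v) ≤ f x + ⟪gradient f x, v⟫_ℝ + L / 2 * ‖v‖ ^ 2 := by
  set φ : ℝ → ℝ := fun t => L / 2 * ‖v‖ ^ 2 * t ^ 2 + t * ⟪gradient f x, v⟫_ℝ - f (x + t • v)
  have hφ : ∀ t, HasDerivAt φ
      (L * ‖v‖ ^ 2 * t - ⟪gradient f (x + t • v) - gradient f x, v⟫_ℝ) t := by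
    intro t
    refine ((((hasDerivAt_pow 2 t).const_mul (L / 2 * ‖v‖ ^ 2)).add
      ((hasDerivAt_id t).mul_const ⟪gradient f x, v⟫_ℝ)).sub
      (hasDerivAt_comp_add_smul (hf _))).congr_deriv ?_
    rw [inner_sub_left]
    simp only [Nat.cast_ofNat]
    ring
  have hφ' : ∀ t, 0 ≤ t → ⟪gradient f (x + t • v) - gradient f x, v⟫_ℝ ≤ L * ‖v‖ ^ 2 * t := by
    intro t ht
    calc ⟪gradient f (x + t • v) - gradient f x, v⟫_ℝ
        ≤ ‖gradient f (x + t • v) - gradient f x‖ * ‖v‖ := real_inner_le_norm _ _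
      _ ≤ L * ‖x + t • v - x‖ * ‖v‖ := by gcongr; exact hLip _ _
      _ = L * ‖v‖ ^ 2 * t := by
        rw [add_sub_cancel_left, norm_smul, Real.norm_of_nonneg ht]; ring
  have hmono : MonotoneOn φ (Ici 0) := by
    refine monotoneOn_of_hasDerivWithinAt_nonneg (convex_Ici 0)
      (fun t _ => (hφ t).continuousAt.continuousWithinAt)
      (fun t _ => (hφ t).hasDerivWithinAt) fun t ht => ?_
    rw [interior_Ici] at ht
    exact sub_nonneg.mpr (hφ' t (le_of_lt ht))
  have h01 := hmono self_mem_Ici (mem_Ici.mpr zero_le_one) zero_le_one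
  simp only [φ, one_smul, zero_smul, add_zero, one_pow, mul_one, one_mul] at h01
  linarith

noncomputable def gradAvgStep (f : F → ℝ) (α : ℝ) (x : F) : F :=
  x - (α / 2) • (gradient f x + gradient f (x - α • gradient f x))

theorem apply_gradAvgStep_le {f : F → ℝ} (hf : Differentiable ℝ f) {L α : ℝ}
    (hLip : ∀ x y, ‖gradient f x - gradient f y‖ ≤ L * ‖x - y‖)
    (hα : 0 ≤ α) (hL : 0 ≤ L) (hLα : L * α ≤ 1 / 3) (x : F) :
    f (gradAvgStep f α x) ≤ f x - α / 2 * ‖gradient f x‖ ^ 2 := by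
  have hstep : gradAvgStep f α x = x + -((α / 2) • ((2 : ℝ) • gradient f x +
      (gradient f (x - α • gradient f x) - gradient f x))) := by
    rw [gradAvgStep, ← sub_eq_add_neg, two_smul]
    congr 2
    abel
  set g := gradient f x
  set d := gradient f (x - α • g) - g
  set v := -((α / 2) • ((2 : ℝ) • g + d)) with hv
  have hd : ‖d‖ ≤ L * α * ‖g‖ := by
    calc ‖d‖ ≤ L * ‖x - α • g - x‖ := hLip _ _
      _ = L * α * ‖g‖ := by
        rw [sub_sub_cancel_left, norm_neg, norm_smul, Real.norm_of_nonneg hα]; ring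
  have hinner : ⟪g, v⟫_ℝ ≤ -α * ‖g‖ ^ 2 + α / 2 * (L * α * ‖g‖ ^ 2) := by
    have hgd : -⟪g, d⟫_ℝ ≤ L * α * ‖g‖ ^ 2 := by
      calc -⟪g, d⟫_ℝ ≤ ‖g‖ * ‖d‖ := (neg_le_abs _).trans (abs_real_inner_le_norm g d)
        _ ≤ ‖g‖ * (L * α * ‖g‖) := by gcongr
        _ = L * α * ‖g‖ ^ 2 := by ring
    rw [hv, inner_neg_right, real_inner_smul_right, inner_add_right, real_inner_smul_right,
      real_inner_self_eq_norm_sq]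
    nlinarith
  have hnorm : ‖v‖ ≤ α / 2 * ((2 + L * α) * ‖g‖) := by
    rw [hv, norm_neg, norm_smul, Real.norm_of_nonneg (by positivity)]
    gcongr
    calc ‖(2 : ℝ) • g + d‖ ≤ ‖(2 : ℝ) • g‖ + ‖d‖ := norm_add_le _ _
      _ ≤ 2 * ‖g‖ + L * α * ‖g‖ := by rw [norm_smul, Real.norm_two]; gcongr
      _ = (2 + L * α) * ‖g‖ := by ring
  have hquad : L / 2 * ‖v‖ ^ 2 ≤ α / 2 * ((1 - L * α) * ‖g‖ ^ 2) := by
    have hs : L * α * (2 + L * α) ^ 2 ≤ 4 * (1 - L * α) := by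
      nlinarith [mul_nonneg hL hα]
    calc L / 2 * ‖v‖ ^ 2
        ≤ L / 2 * (α / 2 * ((2 + L * α) * ‖g‖)) ^ 2 := by gcongr
      _ = α / 8 * (L * α * (2 + L * α) ^ 2) * ‖g‖ ^ 2 := by ring
      _ ≤ α / 8 * (4 * (1 - L * α)) * ‖g‖ ^ 2 := by gcongr
      _ = α / 2 * ((1 - L * α) * ‖g‖ ^ 2) := by ring
  have hdescent := apply_add_le_of_lipschitz_gradient hf hLip x v
  rw [← hstep] at hdescent
  linarith

end Smooth

theorem tendsto_zero_of_mul_norm_sq_le_sub_succ {E : Type*} [SeminormedAddCommGroup E]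
    {u : ℕ → ℝ} {w : ℕ → E} {c : ℝ} (hc : 0 < c) (hu : BddBelow (range u))
    (hdec : ∀ k, c * ‖w k‖ ^ 2 ≤ u k - u (k + 1)) : Tendsto w atTop (𝓝 0) := by
  obtain ⟨m, hm⟩ := hu
  have hsum : Summable fun k => c * ‖w k‖ ^ 2 := by
    refine summable_of_sum_range_le (c := u 0 - m) (fun k => by positivity) fun N => ?_
    calc ∑ k ∈ Finset.range N, c * ‖w k‖ ^ 2
        ≤ ∑ k ∈ Finset.range N, (u k - u (k + 1)) := Finset.sum_le_sum fun k _ => hdec k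
      _ = u 0 - u N := Finset.sum_range_sub' u N
      _ ≤ u 0 - m := by linarith [hm (mem_range_self N)]
  have hsq : Tendsto (fun k => ‖w k‖ ^ 2) atTop (𝓝 0) := by
    simpa [hc.ne'] using hsum.tendsto_atTop_zero.const_mul c⁻¹
  rw [tendsto_zero_iff_norm_tendsto_zero]
  simpa [Real.sqrt_sq (norm_nonneg _)] using hsq.sqrt

theorem grad_avg_gradient_tendsto_zero {n : ℕ}
    (J : EuclideanSpace ℝ (Fin n) → ℝ) (hJ : ContDiff ℝ 1 J) (L : ℝ) (hL : 0 < L)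
    (hLip : ∀ x y, ‖gradient J x - gradient J y‖ ≤ L * ‖x - y‖)
    (α : ℝ) (hα : 0 < α) (hα' : α ≤ 1 / (3 * L))
    (hbdd : BddBelow (Set.range J))
    (θ : ℕ → EuclideanSpace ℝ (Fin n))
    (hrec : ∀ k, θ (k + 1) =
      θ k - (α / 2) • (gradient J (θ k) + gradient J (θ k - α • gradient J (θ k)))) :
    Filter.Tendsto (fun k => gradient J (θ k)) Filter.atTop (nhds 0) := by
  have hLα : L * α ≤ 1 / 3 := by
    rw [le_div_iff₀ (by positivity)] at hα'
    linarith
  have hdec : ∀ k, α / 2 * ‖gradient J (θ k)‖ ^ 2 ≤ J (θ k) - J (θ (k + 1)) := fun k => by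
    have hstep : θ (k + 1) = gradAvgStep J α (θ k) := hrec k
    rw [hstep]
    linarith [apply_gradAvgStep_le (hJ.differentiable one_ne_zero) hLip hα.le hL.le hLα (θ k)]
  exact tendsto_zero_of_mul_norm_sq_le_sub_succ (by positivity)
    (hbdd.mono (range_comp_subset_range θ J)) hdec
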